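/- arXiv:1203.5609 — 3 statements merged into one kernel-verified Lean document; each statement's English description precedes it below -/
import Mathlib

section
/- For q_ψ, q_α: ℝ → ℝ³ with q_ψ ∧ q_α = 0 as in the previous example (q_ψ = -q_α with q_ψ(ψ) = ½(coth ψ cot(μ₁/2) + cot(μ₂/2)/sinh ψ) e_0 + ½cot(μ₁/2) e_1 - ½ e_2), the span h(ψ) = span{q_ψ^a P_a, q_α^a J_a + q_θ^a P_a} is a Cartan subalgebra of iso(2,1) exactly for those ψ with q_ψ·q_ψ ≠ 0; more generally, for any q_ψ, q_α, q_θ: ℝ² → ℝ³ with q_ψ ∧ q_α = 0, q_ψ ≠ 0, q_α ≠ 0, the subspace span{q_ψ^a P_a, q_α^a J_a + q_θ^a P_a} ⊂ iso(2,1) is an abelian subalgebra, and it is self-normalizing if and only if q_ψ·q_ψ ≠ 0. -/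
open Real BigOperators Finset

noncomputable section

/-- Vectors in ℝ³. -/
abbrev V3 : Type := Fin 3 → ℝ

/-- Minkowski metric η = diag(1,-1,-1). -/
def ηm : Fin 3 → ℝ := ![1, -1, -1]

/-- Totally antisymmetric symbol with ε₀₁₂ = 1. -/
def eps : Fin 3 → Fin 3 → Fin 3 → ℝ := fun a b c =>
  if (a, b, c) = ((0 : Fin 3), (1 : Fin 3), (2 : Fin 3)) ∨ (a, b, c) = (1, 2, 0) ∨ (a, b, c) = (2, 0, 1) then 1
  else if (a, b, c) = ((0 : Fin 3), (2 : Fin 3), (1 : Fin 3)) ∨ (a, b, c) = (2, 1, 0) ∨ (a, b, c) = (1, 0, 2) then -1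
  else 0

/-- An element of iso(2,1) is encoded by its J-coefficients and P-coefficients:
`(j, p)` represents `Σ j^a J_a + Σ p^a P_a`. -/
abbrev iso21 : Type := V3 × V3

def Jvec (x : V3) : iso21 := (x, 0)
def Pvec (x : V3) : iso21 := (0, x)
def Jb (a : Fin 3) : iso21 := Jvec (fun i => if i = a then 1 else 0)
def Pb (a : Fin 3) : iso21 := Pvec (fun i => if i = a then 1 else 0)

/-- The Lie bracket of iso(2,1): [J_a,J_b] = ε_{ab}^c J_c, [J_a,P_b] = ε_{ab}^c P_c,
[P_a,P_b] = 0, with ε_{ab}^c = η^{cc} ε_{abc}. -/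
def br (x y : iso21) : iso21 :=
  (fun c => ∑ a, ∑ b, x.1 a * y.1 b * (ηm c * eps a b c),
   fun c => ∑ a, ∑ b, (x.1 a * y.2 b + x.2 a * y.1 b) * (ηm c * eps a b c))

/-- The Ad-invariant pairing ⟨J_a,P_b⟩ = η_{ab}, ⟨J,J⟩ = ⟨P,P⟩ = 0. -/
def pairing (x y : iso21) : ℝ := ∑ a, ηm a * (x.1 a * y.2 a + x.2 a * y.1 a)

/-- Minkowski inner product on ℝ³. -/
def mdot (x y : V3) : ℝ := ∑ a, ηm a * x a * y a

/-- Lorentzian cross product (x∧y)^a = ε^{abc} x_b y_c. -/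
def crossL (x y : V3) : V3 := fun a => ηm a * ∑ b, ∑ c, eps a b c * x b * y c

/-- Index set of the basis {J_a, P_a}: `false` ↦ J, `true` ↦ P. -/
abbrev Bas : Type := Bool × Fin 3

def basis : Bas → iso21 := fun p => if p.1 then Pb p.2 else Jb p.2
def coeff (x : iso21) (p : Bas) : ℝ := if p.1 then x.2 p.2 else x.1 p.2

/-- 2-tensors and 3-tensors over iso(2,1), given by their coefficients in the basis. -/
abbrev TT2 : Type := Bas → Bas → ℝ
abbrev TT3 : Type := Bas → Bas → Bas → ℝ

def tens (x y : iso21) : TT2 := fun μ ν => coeff x μ * coeff y ν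

/-- Structure constants: coefficient of `[T_a, T_c]` on `T_m`. -/
def Cstr (a c m : Bas) : ℝ := coeff (br (basis a) (basis c)) m

/-- The mixed Yang-Baxter expression [[r,s]] = [r₁₂,s₁₃] + [r₁₂,s₂₃] + [r₁₃,s₂₃]. -/
def YB2 (r s : TT2) : TT3 := fun μ ν lam =>
    (∑ a, ∑ c, r a ν * s c lam * Cstr a c μ)
  + (∑ b, ∑ c, r μ b * s c lam * Cstr b c ν)
  + (∑ b, ∑ d, r μ b * s ν d * Cstr b d lam)

/-- The action of X on a 2-tensor: [X⊗1 + 1⊗X, r]. -/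
def act2 (x : iso21) (r : TT2) : TT2 := fun μ ν =>
  (∑ a, r a ν * coeff (br x (basis a)) μ) + (∑ b, r μ b * coeff (br x (basis b)) ν)

/-- The classical r-matrix r = P_a ⊗ J^a. -/
def rPJ : TT2 := fun μ ν => ∑ a, ηm a * tens (Pb a) (Jb a) μ ν

/-- The symmetric part r_S = ½(P_a⊗J^a + J^a⊗P_a). -/
def rSym : TT2 := fun μ ν => (1/2) * ∑ a, ηm a * (tens (Pb a) (Jb a) μ ν + tens (Jb a) (Pb a) μ ν)

/-- The classical dynamical Yang-Baxter equation at (ψ,α) with dynamical elements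
x₁ (paired with ψ) and x₂ (paired with α). -/
def CDYBEat (r : ℝ → ℝ → TT2) (x1 x2 : ℝ → ℝ → iso21) (ψ α : ℝ) : Prop :=
  ∀ μ ν lam : Bas, YB2 (r ψ α) (r ψ α) μ ν lam =
      coeff (x1 ψ α) μ * deriv (fun s => r s α ν lam) ψ
    - coeff (x1 ψ α) ν * deriv (fun s => r s α μ lam) ψ
    + coeff (x1 ψ α) lam * deriv (fun s => r s α μ ν) ψ
    + coeff (x2 ψ α) μ * deriv (fun s => r ψ s ν lam) α
    - coeff (x2 ψ α) ν * deriv (fun s => r ψ s μ lam) α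
    + coeff (x2 ψ α) lam * deriv (fun s => r ψ s μ ν) α

/-- Adjoint action of a Lorentz matrix g on iso(2,1). -/
def adL (g : Matrix (Fin 3) (Fin 3) ℝ) (x : iso21) : iso21 := (g.mulVec x.1, g.mulVec x.2)

/-- Adjoint action of a translation t on iso(2,1): J_a ↦ J_a + ε_{ab}^c t^b P_c, P_a ↦ P_a. -/
def adT (t : V3) (x : iso21) : iso21 :=
  (x.1, fun c => x.2 c + ∑ a, ∑ b, x.1 a * t b * (ηm c * eps a b c))

/-- The proper orthochronous Lorentz group SO⁺(2,1) as 3×3 matrices. -/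
def SOplus : Set (Matrix (Fin 3) (Fin 3) ℝ) :=
  {g | g.transpose * Matrix.diagonal ηm * g = Matrix.diagonal ηm ∧ g.det = 1 ∧ 0 < g 0 0}

/-- The induced action of a linear map on 2-tensors, A⊗A. -/
def Ad2 (A : iso21 → iso21) (r : TT2) : TT2 :=
  fun μ ν => ∑ a : Bas, ∑ b : Bas, r a b * coeff (A (basis a)) μ * coeff (A (basis b)) ν

/-- r(ψ,α) = P_a⊗J^a - V^{bc}(ψ)(P_b⊗J_c - J_c⊗P_b) + ε^{bcd} m_d(ψ,α) P_b⊗P_c. -/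
def rVm (V : ℝ → Matrix (Fin 3) (Fin 3) ℝ) (m : ℝ → ℝ → V3) (ψ α : ℝ) : TT2 := fun μ ν =>
  rPJ μ ν
  - (∑ b, ∑ c, V ψ b c * (tens (Pb b) (Jb c) μ ν - tens (Jb c) (Pb b) μ ν))
  + ∑ b, ∑ c, ∑ d, ηm b * ηm c * eps b c d * m ψ α d * tens (Pb b) (Pb c) μ ν

/-- The vector w defined by ε^{abc} w_c = V^{ab} - V^{ba}. -/
def wOf (V : ℝ → Matrix (Fin 3) (Fin 3) ℝ) (ψ : ℝ) : V3 := fun c =>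
  (1/2) * ∑ a, ∑ b, ηm a * ηm b * eps a b c * (V ψ a b - V ψ b a)

/-- CDYBE condition (i) at (ψ,α), componentwise in (a,b,c). -/
def Cond1At (V : ℝ → Matrix (Fin 3) (Fin 3) ℝ) (m : ℝ → ℝ → V3) (qψ qα : ℝ → V3)
    (ψ α : ℝ) : Prop :=
  ∀ a b c : Fin 3,
    qα ψ a * (∑ d, ηm b * ηm c * eps b c d * deriv (fun s => m ψ s d) α)
    - qψ ψ b * deriv (fun s => V s c a) ψ
    + qψ ψ c * deriv (fun s => V s b a) ψ
    - (∑ d, ∑ g, V ψ b d * V ψ c g * (ηm a * eps d g a))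
    - (∑ d, ∑ g, V ψ d a * V ψ c g * (ηm b * eps d g b))
    + (∑ d, ∑ g, V ψ d a * V ψ b g * (ηm c * eps d g c))
    - (∑ d, V ψ d a * (ηm b * ηm c * eps b c d)) = 0

/-- CDYBE condition (ii) at (ψ,α): q_ψ·∂_ψ m + q_θ·∂_α m + w·m = 0. -/
def Cond2At (V : ℝ → Matrix (Fin 3) (Fin 3) ℝ) (m : ℝ → ℝ → V3) (qψ : ℝ → V3)
    (qθ : ℝ → ℝ → V3) (ψ α : ℝ) : Prop :=
  mdot (qψ ψ) (fun a => deriv (fun s => m s α a) ψ)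
  + mdot (qθ ψ α) (fun a => deriv (fun s => m ψ s a) α)
  + mdot (wOf V ψ) (m ψ α) = 0

def wedgeT (x y : iso21) : TT2 := fun μ ν => tens x y μ ν - tens y x μ ν

/-- The standard dynamical r-matrix for the Cartan subalgebra span{J₀,P₀}. -/
def ra (ψ α : ℝ) : TT2 := fun μ ν =>
  rSym μ ν + (1/2) * Real.tan (ψ/2) * (wedgeT (Pb 1) (Jb 2) μ ν - wedgeT (Pb 2) (Jb 1) μ ν)
  + α / (4 * (Real.cos (ψ/2))^2) * wedgeT (Pb 1) (Pb 2) μ ν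

/-- The standard dynamical r-matrix for the Cartan subalgebra span{J₁,P₁}. -/
def rb (ψ α : ℝ) : TT2 := fun μ ν =>
  rSym μ ν + (1/2) * Real.tanh (ψ/2) * (wedgeT (Pb 2) (Jb 0) μ ν - wedgeT (Pb 0) (Jb 2) μ ν)
  + α / (4 * (Real.cosh (ψ/2))^2) * wedgeT (Pb 2) (Pb 0) μ ν

def ct (x : ℝ) : ℝ := Real.cos x / Real.sin x
def cth (x : ℝ) : ℝ := Real.cosh x / Real.sinh x

/-- w(ψ) = cot(μ₁/2)e₀ + cot(μ₁/2)coth(ψ)e₁ - coth(ψ)e₂. -/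
def w14 (μ1 : ℝ) (ψ : ℝ) : V3 := fun a =>
  if a = 0 then ct (μ1/2) else if a = 1 then ct (μ1/2) * cth ψ else -(cth ψ)

/-- m(ψ,α) = s₁/(4sin²(μ₁/2))e₀ + s₁coth(ψ)/(4sin²(μ₁/2))e₁ + (α/2)∂_ψw(ψ). -/
def m14 (μ1 s1 : ℝ) (ψ α : ℝ) : V3 := fun a =>
  (if a = 0 then s1 / (4 * (Real.sin (μ1/2))^2)
   else if a = 1 then s1 * cth ψ / (4 * (Real.sin (μ1/2))^2) else 0)
  + (α/2) * deriv (fun s => w14 μ1 s a) ψ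

/-- q_ψ(ψ) = ½(coth ψ cot(μ₁/2) + cot(μ₂/2)/sinh ψ)e₀ + ½cot(μ₁/2)e₁ - ½e₂. -/
def qpsi14 (μ1 μ2 : ℝ) (ψ : ℝ) : V3 := fun a =>
  if a = 0 then (1/2) * (cth ψ * ct (μ1/2) + ct (μ2/2) / Real.sinh ψ)
  else if a = 1 then (1/2) * ct (μ1/2) else -(1/2)

/-- q_α = -q_ψ. -/
def qalpha14 (μ1 μ2 : ℝ) (ψ : ℝ) : V3 := fun a => -(qpsi14 μ1 μ2 ψ a)

/-- q_θ(ψ,α). -/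
def qtheta14 (μ1 μ2 s1 s2 : ℝ) (ψ α : ℝ) : V3 := fun a =>
  if a = 0 then
    s1 * cth ψ / (4 * (Real.sin (μ1/2))^2) + s2 / (4 * (Real.sin (μ2/2))^2 * Real.sinh ψ)
      - α * (ct (μ1/2) + Real.cosh ψ * ct (μ2/2)) / (2 * (Real.sinh ψ)^2)
  else if a = 1 then s1 / (4 * (Real.sin (μ1/2))^2) else 0


section Aux

lemma cL0 (x y : V3) : crossL x y 0 = x 1 * y 2 - x 2 * y 1 := by
  simp [crossL, eps, ηm, Fin.sum_univ_three, Prod.ext_iff]; ring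
lemma cL1 (x y : V3) : crossL x y 1 = x 0 * y 2 - x 2 * y 0 := by
  simp [crossL, eps, ηm, Fin.sum_univ_three, Prod.ext_iff]; ring
lemma cL2 (x y : V3) : crossL x y 2 = x 1 * y 0 - x 0 * y 1 := by
  simp [crossL, eps, ηm, Fin.sum_univ_three, Prod.ext_iff]; ring
lemma mdot_eq (x y : V3) : mdot x y = x 0 * y 0 - x 1 * y 1 - x 2 * y 2 := by
  simp [mdot, ηm, Fin.sum_univ_three]; ring
lemma ext3 {x y : V3} (h0 : x 0 = y 0) (h1 : x 1 = y 1) (h2 : x 2 = y 2) : x = y := by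
  funext a; fin_cases a <;> assumption
lemma ne3 {q : V3} (hq : q ≠ 0) : q 0 ≠ 0 ∨ q 1 ≠ 0 ∨ q 2 ≠ 0 := by
  by_contra h; push_neg at h; exact hq (ext3 h.1 h.2.1 h.2.2)
lemma iso_ext {u v : iso21} (h1 : u.1 = v.1) (h2 : u.2 = v.2) : u = v := Prod.ext h1 h2

lemma dep (x q : V3) (hq : q ≠ 0) (h : crossL x q = 0) : ∃ μ : ℝ, x = μ • q := by
  have E0 : x 1 * q 2 - x 2 * q 1 = 0 := by rw [← cL0 x q, h]; rfl
  have E1 : x 0 * q 2 - x 2 * q 0 = 0 := by rw [← cL1 x q, h]; rfl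
  have E2 : x 1 * q 0 - x 0 * q 1 = 0 := by rw [← cL2 x q, h]; rfl
  rcases ne3 hq with hi | hi | hi
  · refine ⟨x 0 / q 0, ext3 ?_ ?_ ?_⟩ <;> simp only [Pi.smul_apply, smul_eq_mul] <;>
      field_simp <;> linarith [E0, E1, E2]
  · refine ⟨x 1 / q 1, ext3 ?_ ?_ ?_⟩ <;> simp only [Pi.smul_apply, smul_eq_mul] <;>
      field_simp <;> linarith [E0, E1, E2]
  · refine ⟨x 2 / q 2, ext3 ?_ ?_ ?_⟩ <;> simp only [Pi.smul_apply, smul_eq_mul] <;>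
      field_simp <;> linarith [E0, E1, E2]

lemma br_eq (u v : iso21) : br u v =
    (crossL u.1 v.1, crossL u.1 v.2 + crossL u.2 v.1) := by
  refine iso_ext ?_ ?_ <;> funext c <;> fin_cases c <;>
    simp [br, crossL, eps, ηm, Fin.sum_univ_three, Prod.ext_iff] <;> ring

lemma crossL_zero_right (x : V3) : crossL x 0 = 0 := by
  refine ext3 ?_ ?_ ?_ <;> simp [cL0, cL1, cL2]
lemma crossL_zero_left (x : V3) : crossL 0 x = 0 := by
  refine ext3 ?_ ?_ ?_ <;> simp [cL0, cL1, cL2]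
lemma crossL_self (x : V3) : crossL x x = 0 := by
  refine ext3 ?_ ?_ ?_ <;> simp [cL0, cL1, cL2] <;> ring
lemma crossL_anti (x y : V3) : crossL x y = -crossL y x := by
  refine ext3 ?_ ?_ ?_ <;> simp [cL0, cL1, cL2] <;> ring
lemma crossL_smul_left (t : ℝ) (x y : V3) : crossL (t • x) y = t • crossL x y := by
  refine ext3 ?_ ?_ ?_ <;> simp [cL0, cL1, cL2] <;> ring
lemma crossL_smul_right (t : ℝ) (x y : V3) : crossL x (t • y) = t • crossL x y := by
  refine ext3 ?_ ?_ ?_ <;> simp [cL0, cL1, cL2] <;> ring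
lemma crossL_add_left (x y z : V3) : crossL (x + y) z = crossL x z + crossL y z := by
  refine ext3 ?_ ?_ ?_ <;> simp [cL0, cL1, cL2] <;> ring
lemma crossL_add_right (x y z : V3) : crossL x (y + z) = crossL x y + crossL x z := by
  refine ext3 ?_ ?_ ?_ <;> simp [cL0, cL1, cL2] <;> ring
lemma crossL_sub_left (x y z : V3) : crossL (x - y) z = crossL x z - crossL y z := by
  refine ext3 ?_ ?_ ?_ <;> simp [cL0, cL1, cL2] <;> ring
lemma mdot_smul_right (t : ℝ) (x y : V3) : mdot x (t • y) = t * mdot x y := by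
  simp [mdot_eq]; ring
lemma mdot_add_right (x y z : V3) : mdot x (y + z) = mdot x y + mdot x z := by
  simp [mdot_eq]; ring
lemma mdot_cross_left (x y : V3) : mdot y (crossL x y) = 0 := by
  rw [mdot_eq, cL0, cL1, cL2]; ring
lemma mdot_cross_right (x y : V3) : mdot x (crossL x y) = 0 := by
  rw [mdot_eq, cL0, cL1, cL2]; ring

theorem key (qψ qα qθ : V3) (hc : crossL qψ qα = 0) (hψ : qψ ≠ 0) (hα : qα ≠ 0) :
    (∀ u ∈ Submodule.span ℝ ({Pvec qψ, Jvec qα + Pvec qθ} : Set iso21),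
      ∀ v ∈ Submodule.span ℝ ({Pvec qψ, Jvec qα + Pvec qθ} : Set iso21), br u v = 0) ∧
    ((∀ z : iso21,
        (∀ u ∈ Submodule.span ℝ ({Pvec qψ, Jvec qα + Pvec qθ} : Set iso21),
          br z u ∈ Submodule.span ℝ ({Pvec qψ, Jvec qα + Pvec qθ} : Set iso21)) →
        z ∈ Submodule.span ℝ ({Pvec qψ, Jvec qα + Pvec qθ} : Set iso21))
      ↔ mdot qψ qψ ≠ 0) := by
  obtain ⟨lam, hlam⟩ := dep qα qψ hψ (by rw [crossL_anti, hc]; simp)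
  have hlam0 : lam ≠ 0 := fun h => hα (by rw [hlam, h, zero_smul])
  have hca : crossL qα qψ = 0 := by rw [crossL_anti, hc]; simp
  have fst_comb : ∀ a b : ℝ, (a • Pvec qψ + b • (Jvec qα + Pvec qθ)).1 = b • qα := by
    intro a b; simp [Pvec, Jvec]
  have snd_comb : ∀ a b : ℝ, (a • Pvec qψ + b • (Jvec qα + Pvec qθ)).2 = a • qψ + b • qθ := by
    intro a b; simp [Pvec, Jvec]
  constructor
  · intro u hu v hv
    rw [Submodule.mem_span_pair] at hu hv
    obtain ⟨a, b, hu⟩ := hu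
    obtain ⟨c, d, hv⟩ := hv
    rw [← hu, ← hv, br_eq]
    refine iso_ext ?_ ?_ <;>
      simp only [fst_comb, snd_comb, Prod.fst_zero, Prod.snd_zero]
    · rw [crossL_smul_left, crossL_smul_right, crossL_self]; simp
    · simp only [crossL_add_right, crossL_add_left, crossL_smul_left, crossL_smul_right,
        hc, hca, crossL_anti qθ qα, smul_neg, smul_zero]
      module
  · constructor
    · -- self-normalizing → mdot ≠ 0
      intro hsn hm0
      have M : qψ 0 * qψ 0 - qψ 1 * qψ 1 - qψ 2 * qψ 2 = 0 := by rw [← mdot_eq]; exact hm0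
      have hq0 : qψ 0 ≠ 0 := by
        intro h
        apply hψ
        have h1 : qψ 1 * qψ 1 = 0 := by nlinarith [mul_self_nonneg (qψ 1), mul_self_nonneg (qψ 2)]
        have h2 : qψ 2 * qψ 2 = 0 := by nlinarith [mul_self_nonneg (qψ 1), mul_self_nonneg (qψ 2)]
        exact ext3 h (mul_self_eq_zero.mp h1) (mul_self_eq_zero.mp h2)
      set jst : V3 := fun i => if i = 1 then qψ 2 else if i = 2 then -(qψ 1) else 0 with hjst
      have hjq : crossL jst qψ = qψ 0 • qψ := by
        refine ext3 ?_ ?_ ?_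
        · simp [cL0, hjst]; linear_combination -M
        · simp [cL1, hjst]; ring
        · simp [cL2, hjst]; ring
      have hwit := hsn ((0 : V3), jst) ?_
      · rw [Submodule.mem_span_pair] at hwit
        obtain ⟨c, a, hw⟩ := hwit
        have hf := congrArg Prod.fst hw
        rw [fst_comb] at hf
        have ha : a = 0 := by
          rcases smul_eq_zero.mp hf with h | h
          · exact h
          · exact absurd h hα
        have hs := congrArg Prod.snd hw
        rw [snd_comb, ha, zero_smul, add_zero] at hs
        have h0 := congrFun hs 0
        simp [hjst] at h0
        rcases h0 with h0 | h0
        · -- c = 0, then jst = 0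
          rw [h0, zero_smul] at hs
          have g1 := congrFun hs 1
          have g2 := congrFun hs 2
          simp [hjst] at g1 g2
          exact hq0 (by nlinarith [M])
        · exact hq0 h0
      · intro u hu
        rw [Submodule.mem_span_pair] at hu ⊢
        obtain ⟨a, b, hu⟩ := hu
        refine ⟨b * (lam * qψ 0), 0, ?_⟩
        rw [← hu, br_eq]
        refine iso_ext ?_ ?_ <;>
          simp only [fst_comb, snd_comb, crossL_zero_left, zero_add]
        · simp
        · rw [hlam, smul_smul, crossL_smul_right, hjq, ← smul_smul]
          simp [Pvec, Jvec, smul_smul]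
          module
    · -- mdot ≠ 0 → self-normalizing
      intro hm z hz
      have m1 := hz (Pvec qψ) (Submodule.subset_span (Set.mem_insert _ _))
      have m2 := hz (Jvec qα + Pvec qθ)
        (Submodule.subset_span (Set.mem_insert_of_mem _ rfl))
      have b1 : br z (Pvec qψ) = ((0 : V3), crossL z.1 qψ) := by
        rw [br_eq]; refine iso_ext ?_ ?_ <;>
          simp [Pvec, crossL_zero_right]
      have b2 : br z (Jvec qα + Pvec qθ) =
          (crossL z.1 qα, crossL z.1 qθ + crossL z.2 qα) := by
        rw [br_eq]; refine iso_ext ?_ ?_ <;>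
          simp [Pvec, Jvec, crossL_zero_right]
      rw [b1] at m1
      rw [b2] at m2
      rw [Submodule.mem_span_pair] at m1
      obtain ⟨c1, a1, h1⟩ := m1
      have hf1 := congrArg Prod.fst h1
      rw [fst_comb] at hf1
      have ha1 : a1 = 0 := by
        rcases smul_eq_zero.mp hf1 with h | h
        · exact h
        · exact absurd h hα
      have hs1 := congrArg Prod.snd h1
      rw [snd_comb, ha1, zero_smul, add_zero] at hs1
      replace hs1 : c1 • qψ = crossL z.1 qψ := hs1
      -- hs1 : c1 • qψ = crossL z.1 qψ
      have hc1 : c1 = 0 := by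
        have h := mdot_cross_left z.1 qψ
        rw [← hs1, mdot_smul_right] at h
        rcases mul_eq_zero.mp h with h | h
        · exact h
        · exact absurd h hm
      rw [hc1, zero_smul] at hs1
      obtain ⟨μ, hμ⟩ := dep z.1 qψ hψ hs1.symm
      have hz1a : crossL z.1 qα = 0 := by
        rw [hμ, hlam, crossL_smul_left, crossL_smul_right, crossL_self, smul_zero, smul_zero]
      rw [hz1a] at m2
      rw [Submodule.mem_span_pair] at m2
      obtain ⟨c2, a2, h2⟩ := m2
      have hf2 := congrArg Prod.fst h2
      rw [fst_comb] at hf2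
      have ha2 : a2 = 0 := by
        rcases smul_eq_zero.mp hf2 with h | h
        · exact h
        · exact absurd h hα
      have hs2 := congrArg Prod.snd h2
      rw [snd_comb, ha2, zero_smul, add_zero] at hs2
      replace hs2 : c2 • qψ = crossL z.1 qθ + crossL z.2 qα := hs2
      -- hs2 : c2 • qψ = crossL z.1 qθ + crossL z.2 qα
      have hc2 : c2 = 0 := by
        have h : mdot qψ (crossL z.1 qθ + crossL z.2 qα) = 0 := by
          rw [mdot_add_right, hμ, hlam, crossL_smul_left, crossL_smul_right,
            mdot_smul_right, mdot_smul_right, mdot_cross_right, mdot_cross_left]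
          ring
        rw [← hs2, mdot_smul_right] at h
        rcases mul_eq_zero.mp h with h | h
        · exact h
        · exact absurd h hm
      rw [hc2, zero_smul] at hs2
      have hE : μ • crossL qψ qθ + lam • crossL z.2 qψ = 0 := by
        rw [← crossL_smul_left, ← hμ, ← crossL_smul_right, ← hlam]
        exact hs2.symm
      have hkey : crossL (lam • z.2 - μ • qθ) qψ = 0 := by
        rw [crossL_sub_left, crossL_smul_left, crossL_smul_left, crossL_anti qθ qψ,
          smul_neg, sub_neg_eq_add, add_comm]
        exact hE
      obtain ⟨ν, hν⟩ := dep _ qψ hψ hkey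
      rw [Submodule.mem_span_pair]
      refine ⟨ν / lam, μ / lam, iso_ext ?_ ?_⟩
      · rw [fst_comb, hlam, hμ, smul_smul, div_mul_cancel₀ _ hlam0]
      · rw [snd_comb]
        have g0 := congrFun hν 0
        have g1 := congrFun hν 1
        have g2 := congrFun hν 2
        simp only [Pi.sub_apply, Pi.smul_apply, smul_eq_mul] at g0 g1 g2
        refine ext3 ?_ ?_ ?_ <;>
          simp only [Pi.add_apply, Pi.smul_apply, smul_eq_mul] <;>
          field_simp <;> linarith [g0, g1, g2]


end Aux

/-- for any q_ψ, q_α, q_θ with q_ψ∧q_α = 0 and q_ψ, q_α ≠ 0, the subspace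
span{q_ψ^aP_a, q_α^aJ_a + q_θ^aP_a} ⊂ iso(2,1) is an abelian subalgebra, and it is
self-normalizing iff q_ψ·q_ψ ≠ 0; in particular for the specific data of the example,
h(ψ) is a Cartan subalgebra exactly for those ψ with q_ψ·q_ψ ≠ 0. -/
theorem stmt15 :
    (∀ qψ qα qθ : V3, crossL qψ qα = 0 → qψ ≠ 0 → qα ≠ 0 →
      (∀ u ∈ Submodule.span ℝ ({Pvec qψ, Jvec qα + Pvec qθ} : Set iso21),
        ∀ v ∈ Submodule.span ℝ ({Pvec qψ, Jvec qα + Pvec qθ} : Set iso21), br u v = 0) ∧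
      ((∀ z : iso21,
          (∀ u ∈ Submodule.span ℝ ({Pvec qψ, Jvec qα + Pvec qθ} : Set iso21),
            br z u ∈ Submodule.span ℝ ({Pvec qψ, Jvec qα + Pvec qθ} : Set iso21)) →
          z ∈ Submodule.span ℝ ({Pvec qψ, Jvec qα + Pvec qθ} : Set iso21))
        ↔ mdot qψ qψ ≠ 0)) ∧
    (∀ μ1 μ2 s1 s2 : ℝ, μ1 ∈ Set.Ioo 0 (2*π) → μ2 ∈ Set.Ioo 0 (2*π) →
      ∀ ψ : ℝ, ψ ≠ 0 → ∀ α : ℝ,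
        (((∀ u ∈ Submodule.span ℝ ({Pvec (qpsi14 μ1 μ2 ψ),
              Jvec (qalpha14 μ1 μ2 ψ) + Pvec (qtheta14 μ1 μ2 s1 s2 ψ α)} : Set iso21),
            ∀ v ∈ Submodule.span ℝ ({Pvec (qpsi14 μ1 μ2 ψ),
              Jvec (qalpha14 μ1 μ2 ψ) + Pvec (qtheta14 μ1 μ2 s1 s2 ψ α)} : Set iso21),
              br u v = 0) ∧
          (∀ z : iso21,
            (∀ u ∈ Submodule.span ℝ ({Pvec (qpsi14 μ1 μ2 ψ),
                Jvec (qalpha14 μ1 μ2 ψ) + Pvec (qtheta14 μ1 μ2 s1 s2 ψ α)} : Set iso21),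
              br z u ∈ Submodule.span ℝ ({Pvec (qpsi14 μ1 μ2 ψ),
                Jvec (qalpha14 μ1 μ2 ψ) + Pvec (qtheta14 μ1 μ2 s1 s2 ψ α)} : Set iso21)) →
            z ∈ Submodule.span ℝ ({Pvec (qpsi14 μ1 μ2 ψ),
                Jvec (qalpha14 μ1 μ2 ψ) + Pvec (qtheta14 μ1 μ2 s1 s2 ψ α)} : Set iso21)))
          ↔ mdot (qpsi14 μ1 μ2 ψ) (qpsi14 μ1 μ2 ψ) ≠ 0)) := by
  constructor
  · intro qψ qα qθ hc hψ hα
    exact key qψ qα qθ hc hψ hα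
  · intro μ1 μ2 s1 s2 _ _ ψ _ α
    have hψne : qpsi14 μ1 μ2 ψ ≠ 0 := by
      intro h
      have h2 := congrFun h 2
      simp [qpsi14] at h2
    have hαne : qalpha14 μ1 μ2 ψ ≠ 0 := by
      intro h
      have h2 := congrFun h 2
      simp [qalpha14, qpsi14] at h2
    have hcr : crossL (qpsi14 μ1 μ2 ψ) (qalpha14 μ1 μ2 ψ) = 0 := by
      refine ext3 ?_ ?_ ?_ <;> simp [cL0, cL1, cL2, qalpha14] <;> ring
    obtain ⟨hab, hiff⟩ := key _ _ _ hcr hψne hαne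
    exact ⟨fun h => hiff.mp h.2, fun h => ⟨hab, hiff.mpr h⟩⟩
end
end

section
/- Let r_a be the standard classical dynamical r-matrix r_a(ψ,α) = ½(P_a⊗J^a + J^a⊗P_a) + ½tan(ψ/2)(P_1∧J_2 - P_2∧J_1) + (α/(4cos²(ψ/2)))P_1∧P_2 for the Cartan subalgebra h_a = span{J_0,P_0}, and let Π(ψ,α) = (exp(-β(ψ)J_0), -[γ(ψ)+αδ(ψ)]e_0) be a gauge transformation with values in the abelian subgroup exp(h_a). Then the gauge-transformed r-matrix is r_a^Π(ψ,α) = r_a(ψ,α) - [β'(ψ) - δ(ψ)] P_0∧J_0; in particular, r_a is invariant under gauge transformations with δ = β'. -/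
open Real BigOperators Finset

noncomputable section

/-- The adjoint (vector) representation of exp(-βJ₀): a rotation fixing e₀. -/
def Rot18 (b : ℝ) : Matrix (Fin 3) (Fin 3) ℝ :=
  !![1, 0, 0; 0, Real.cos b, -Real.sin b; 0, Real.sin b, Real.cos b]

/-- The adjoint action of Π(ψ,α) = (exp(-β(ψ)J₀), -[γ(ψ)+αδ(ψ)]e₀) on iso(2,1). -/
def AdPi (β γ δ : ℝ → ℝ) (ψ α : ℝ) : iso21 → iso21 := fun x =>
  adT (fun a => if a = 0 then -(γ ψ + α * δ ψ) else 0) (adL (Rot18 (β ψ)) x)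

/-- η̄^Π = P₀ ⊗ (Π⁻¹∂_ψΠ) + J₀ ⊗ (Π⁻¹∂_αΠ), with
Π⁻¹∂_ψΠ = -β'(ψ)J₀ - (γ'(ψ)+αδ'(ψ))P₀ and Π⁻¹∂_αΠ = -δ(ψ)P₀. -/
def etaPi (β γ δ : ℝ → ℝ) (ψ α : ℝ) : TT2 := fun σ τ =>
  tens (Pb 0) ((-(deriv β ψ)) • Jb 0 + (-(deriv γ ψ + α * deriv δ ψ)) • Pb 0) σ τ
  + tens (Jb 0) ((-(δ ψ)) • Pb 0) σ τ

set_option maxHeartbeats 8000000 in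
/-- gauge-transforming the standard dynamical r-matrix r_a by
Π(ψ,α) = (exp(-β(ψ)J₀), -[γ(ψ)+αδ(ψ)]e₀) yields r_a^Π = r_a - [β' - δ] P₀∧J₀;
in particular r_a is invariant under such gauge transformations with δ = β'. -/
theorem stmt18 (β γ δ : ℝ → ℝ)
    (hβ : ContDiff ℝ (⊤ : ℕ∞) β) (hγ : ContDiff ℝ (⊤ : ℕ∞) γ) (hδ : ContDiff ℝ (⊤ : ℕ∞) δ) :
    (∀ ψ ∈ Set.Ioo (-(π/2)) (π/2), ∀ α : ℝ, ∀ σ τ : Bas,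
      Ad2 (AdPi β γ δ ψ α)
        (fun σ' τ' => ra ψ α σ' τ' + etaPi β γ δ ψ α σ' τ' - etaPi β γ δ ψ α τ' σ') σ τ
      = ra ψ α σ τ
        - (deriv β ψ - δ ψ) * (tens (Pb 0) (Jb 0) σ τ - tens (Jb 0) (Pb 0) σ τ)) ∧
    ((∀ s : ℝ, δ s = deriv β s) →
      ∀ ψ ∈ Set.Ioo (-(π/2)) (π/2), ∀ α : ℝ, ∀ σ τ : Bas,
        Ad2 (AdPi β γ δ ψ α)
          (fun σ' τ' => ra ψ α σ' τ' + etaPi β γ δ ψ α σ' τ' - etaPi β γ δ ψ α τ' σ') σ τ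
        = ra ψ α σ τ) := by
  have key : ∀ ψ ∈ Set.Ioo (-(π/2)) (π/2), ∀ α : ℝ, ∀ σ τ : Bas,
      Ad2 (AdPi β γ δ ψ α)
        (fun σ' τ' => ra ψ α σ' τ' + etaPi β γ δ ψ α σ' τ' - etaPi β γ δ ψ α τ' σ') σ τ
      = ra ψ α σ τ
        - (deriv β ψ - δ ψ) * (tens (Pb 0) (Jb 0) σ τ - tens (Jb 0) (Pb 0) σ τ) := by
    intro ψ _ α σ τ
    have hcos : Real.cos (β ψ)^2 = 1 - Real.sin (β ψ)^2 := by
      nlinarith [Real.sin_sq_add_cos_sq (β ψ)]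
    obtain ⟨b, i⟩ := σ; obtain ⟨c, j⟩ := τ
    cases b <;> cases c <;> fin_cases i <;> fin_cases j <;>
    · simp only [Ad2, AdPi, adT, adL, Rot18, ra, rSym, rPJ, wedgeT, tens, etaPi, coeff, basis,
        Jb, Pb, Jvec, Pvec, ηm, eps, Matrix.mulVec, dotProduct, Fintype.sum_prod_type,
        Fintype.sum_bool, Fin.sum_univ_three, Matrix.cons_val', Matrix.cons_val_zero,
        Matrix.cons_val_one, Matrix.head_cons, Matrix.empty_val', Matrix.cons_val_fin_one,
        Matrix.head_fin_const, Matrix.cons_val_two, Matrix.tail_cons, Matrix.of_apply,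
        Prod.mk.injEq, Fin.isValue, smul_eq_mul, Prod.fst, Prod.snd, Fin.reduceEq, reduceIte,
        and_true, true_and, and_false, false_and, if_true, if_false,
        mul_zero, zero_mul, mul_one, one_mul, add_zero, zero_add, mul_neg, neg_mul, neg_zero,
        Bool.false_eq_true, Pi.zero_apply, Prod.snd_zero, Prod.fst_zero]
      try norm_num
      try norm_num [Fin.ext_iff]
      try ring_nf
      try rw [hcos]
      try ring
  refine ⟨key, fun hd ψ hψ α σ τ => ?_⟩
  rw [key ψ hψ α σ τ, hd ψ]
  ring
end
end

section
/- The element ρ(ψ,α) = [β'(ψ) - δ(ψ)](P_0⊗J_0 - J_0⊗P_0) satisfies [[r_a, ρ]] + [[ρ, r_a]] = 0 and [[ρ,ρ]] = 0, where [[r,s]] := [r_{12}, s_{13}] + [r_{12}, s_{23}] + [r_{13}, s_{23}]; consequently if r_a satisfies the CDYBE with x_1 = P_0, x_2 = J_0 (variables ψ, α) and ρ is independent of α and built from the h_a-invariant element P_0∧J_0, then r_a + ρ also satisfies the CDYBE (the right-hand dynamical terms for ρ vanish since x_1^{(i)}∂_ψ ρ-terms involve only P_0 components commuting appropriately). -/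
open Real BigOperators Finset

noncomputable section

/-- ρ(ψ,α) = [β'(ψ) - δ(ψ)](P₀⊗J₀ - J₀⊗P₀). -/
def rho19 (β δ : ℝ → ℝ) (ψ : ℝ) : TT2 := fun σ τ =>
  (deriv β ψ - δ ψ) * (tens (Pb 0) (Jb 0) σ τ - tens (Jb 0) (Pb 0) σ τ)

/-!
ρ is a multiple of `P₀ ∧ J₀`, and `[P₀, J₀] = 0`. For any 2-tensor `r` and any `x, y`,
`[[r, x ∧ y]] + [[x ∧ y, r]]` is a linear combination of the components of `(ad_x ⊗ 1 + 1 ⊗ ad_x) r`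
and `(ad_y ⊗ 1 + 1 ⊗ ad_y) r`. Since `r_a` is invariant under `h_a = span {J₀, P₀}`, the mixed terms
vanish; applied to `r = x ∧ y` with `[x, y] = 0`, the same identity gives `[[ρ, ρ]] = 0`. In the
CDYBE for `r_a + ρ`, the new `ψ`-derivative terms are `∂_ψ(β' - δ)` times
`P₀⁽¹⁾ (P₀ ∧ J₀)₂₃ - P₀⁽²⁾ (P₀ ∧ J₀)₁₃ + P₀⁽³⁾ (P₀ ∧ J₀)₁₂ = 0`, and ρ does not depend on `α`.
-/

theorem eps_swap (a b c : Fin 3) : eps b a c = -eps a b c := by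
  fin_cases a <;> fin_cases b <;> fin_cases c <;> simp [eps, Fin.ext_iff]

theorem br_swap (x y : iso21) : br y x = -br x y := by
  refine Prod.ext (funext fun c => ?_) (funext fun c => ?_)
  · simp only [br, Prod.fst_neg, Pi.neg_apply, ← Finset.sum_neg_distrib]
    rw [Finset.sum_comm]
    refine Finset.sum_congr rfl fun a _ => Finset.sum_congr rfl fun b _ => ?_
    rw [eps_swap]; ring
  · simp only [br, Prod.snd_neg, Pi.neg_apply, ← Finset.sum_neg_distrib]
    rw [Finset.sum_comm]
    refine Finset.sum_congr rfl fun a _ => Finset.sum_congr rfl fun b _ => ?_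
    rw [eps_swap]; ring

theorem br_self (x : iso21) : br x x = 0 := by
  have h := br_swap x x
  rwa [eq_neg_iff_add_eq_zero, ← two_smul ℝ, smul_eq_zero, or_iff_right two_ne_zero] at h

theorem coeff_zero (m : Bas) : coeff 0 m = 0 := by
  unfold coeff; split_ifs <;> rfl

theorem coeff_neg (x : iso21) (m : Bas) : coeff (-x) m = -coeff x m := by
  unfold coeff; split_ifs <;> rfl

theorem coeff_basis (a c : Bas) : coeff (basis a) c = if c = a then 1 else 0 := by
  rcases a with ⟨_ | _, a⟩ <;> rcases c with ⟨_ | _, c⟩ <;>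
    simp [coeff, basis, Jb, Pb, Jvec, Pvec]

theorem sum_Bas (f : Bas → ℝ) : ∑ p, f p = ∑ i, f (false, i) + ∑ i, f (true, i) := by
  rw [Fintype.sum_prod_type, Fintype.sum_bool, add_comm]

theorem coeff_br (x y : iso21) (m : Bas) :
    coeff (br x y) m = ∑ a, ∑ c, coeff x a * coeff y c * Cstr a c m := by
  rcases m with ⟨_ | _, m⟩ <;>
    simp [sum_Bas, Cstr, coeff, br, basis, Jb, Pb, Jvec, Pvec, Finset.sum_add_distrib, add_mul,
      mul_add, ite_mul, mul_ite]

theorem coeff_br_basis_right (x : iso21) (c m : Bas) :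
    coeff (br x (basis c)) m = ∑ a, coeff x a * Cstr a c m := by
  simp [coeff_br, coeff_basis]

theorem sum_coeff_mul_Cstr (y : iso21) (a m : Bas) :
    ∑ c, coeff y c * Cstr a c m = -coeff (br y (basis a)) m := by
  rw [← coeff_neg, ← br_swap]
  simp [coeff_br, coeff_basis]

theorem sum_coeff_mul_coeff_br_basis (x y : iso21) (m : Bas) :
    ∑ a, coeff y a * coeff (br x (basis a)) m = coeff (br x y) m := by
  simp only [coeff_br_basis_right, Finset.mul_sum]
  rw [coeff_br, Finset.sum_comm]
  simp only [mul_left_comm (coeff y _), mul_assoc]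

theorem br_Jb_zero_Jb_one : br (Jb 0) (Jb 1) = -Jb 2 := by
  ext c <;> fin_cases c <;> simp [br, Jb, Jvec, Fin.sum_univ_three, ηm, eps]

theorem br_Jb_zero_Jb_two : br (Jb 0) (Jb 2) = Jb 1 := by
  ext c <;> fin_cases c <;> simp [br, Jb, Jvec, Fin.sum_univ_three, ηm, eps]

theorem br_Jb_zero_Pb_zero : br (Jb 0) (Pb 0) = 0 := by
  ext c <;> fin_cases c <;> simp [br, Jb, Pb, Jvec, Pvec, Fin.sum_univ_three, eps]

theorem br_Jb_zero_Pb_one : br (Jb 0) (Pb 1) = -Pb 2 := by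
  ext c <;> fin_cases c <;> simp [br, Jb, Pb, Jvec, Pvec, Fin.sum_univ_three, ηm, eps]

theorem br_Jb_zero_Pb_two : br (Jb 0) (Pb 2) = Pb 1 := by
  ext c <;> fin_cases c <;> simp [br, Jb, Pb, Jvec, Pvec, Fin.sum_univ_three, ηm, eps]

theorem br_Pb_zero_Jb_zero : br (Pb 0) (Jb 0) = 0 := by
  ext c <;> fin_cases c <;> simp [br, Jb, Pb, Jvec, Pvec, Fin.sum_univ_three, eps]

theorem br_Pb_zero_Jb_one : br (Pb 0) (Jb 1) = -Pb 2 := by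
  ext c <;> fin_cases c <;> simp [br, Jb, Pb, Jvec, Pvec, Fin.sum_univ_three, ηm, eps]

theorem br_Pb_zero_Jb_two : br (Pb 0) (Jb 2) = Pb 1 := by
  ext c <;> fin_cases c <;> simp [br, Jb, Pb, Jvec, Pvec, Fin.sum_univ_three, ηm, eps]

theorem br_Pb_Pb (a b : Fin 3) : br (Pb a) (Pb b) = 0 := by
  ext c <;> simp [br, Pb, Pvec]

theorem tens_neg_left (x y : iso21) : tens (-x) y = -tens x y := by
  funext μ ν; simp [tens, coeff_neg]

theorem tens_neg_right (x y : iso21) : tens x (-y) = -tens x y := by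
  funext μ ν; simp [tens, coeff_neg]

theorem tens_zero_left (y : iso21) : tens 0 y = 0 := by
  funext μ ν; simp [tens, coeff_zero]

theorem tens_zero_right (x : iso21) : tens x 0 = 0 := by
  funext μ ν; simp [tens, coeff_zero]

theorem wedgeT_eq_tens_sub (x y : iso21) : wedgeT x y = tens x y - tens y x := rfl

theorem wedgeT_apply_comm (x y : iso21) (μ ν : Bas) : wedgeT x y μ ν = wedgeT y x ν μ := by
  simp only [wedgeT, tens]; ring

theorem coeff_mul_wedgeT_alternating (x y : iso21) (μ ν lam : Bas) :
    coeff x μ * wedgeT x y ν lam - coeff x ν * wedgeT x y μ lam + coeff x lam * wedgeT x y μ ν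
      = 0 := by
  simp only [wedgeT, tens]; ring

theorem act2_add (z : iso21) (r s : TT2) : act2 z (r + s) = act2 z r + act2 z s := by
  funext μ ν
  simp only [act2, Pi.add_apply, add_mul, Finset.sum_add_distrib]
  ring

theorem act2_smul (z : iso21) (c : ℝ) (r : TT2) : act2 z (c • r) = c • act2 z r := by
  funext μ ν
  simp only [act2, Pi.smul_apply, smul_eq_mul, mul_add, Finset.mul_sum, mul_assoc]

theorem act2_sub (z : iso21) (r s : TT2) : act2 z (r - s) = act2 z r - act2 z s := by
  rw [sub_eq_add_neg, act2_add, ← neg_one_smul ℝ s, act2_smul, neg_one_smul, ← sub_eq_add_neg]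

theorem act2_tens (z x y : iso21) :
    act2 z (tens x y) = tens (br z x) y + tens x (br z y) := by
  funext μ ν
  simp only [act2, tens, Pi.add_apply, mul_right_comm _ (coeff _ ν), ← Finset.sum_mul,
    mul_assoc (coeff _ μ), ← Finset.mul_sum, sum_coeff_mul_coeff_br_basis]

theorem act2_wedgeT (z x y : iso21) :
    act2 z (wedgeT x y) = wedgeT (br z x) y + wedgeT x (br z y) := by
  simp only [wedgeT_eq_tens_sub, act2_sub, act2_tens]
  abel

theorem YB2_add_left (r r' s : TT2) (μ ν lam : Bas) :
    YB2 (r + r') s μ ν lam = YB2 r s μ ν lam + YB2 r' s μ ν lam := by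
  simp only [YB2, Pi.add_apply, add_mul, Finset.sum_add_distrib]
  ring

theorem YB2_add_right (r s s' : TT2) (μ ν lam : Bas) :
    YB2 r (s + s') μ ν lam = YB2 r s μ ν lam + YB2 r s' μ ν lam := by
  simp only [YB2, Pi.add_apply, mul_add, add_mul, Finset.sum_add_distrib]
  ring

theorem YB2_smul_left (c : ℝ) (r s : TT2) (μ ν lam : Bas) :
    YB2 (c • r) s μ ν lam = c * YB2 r s μ ν lam := by
  simp only [YB2, Pi.smul_apply, smul_eq_mul, mul_add, Finset.mul_sum, mul_assoc]

theorem YB2_smul_right (c : ℝ) (r s : TT2) (μ ν lam : Bas) :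
    YB2 r (c • s) μ ν lam = c * YB2 r s μ ν lam := by
  simp only [YB2, Pi.smul_apply, smul_eq_mul, mul_add, Finset.mul_sum]
  congr 1; congr 1
  all_goals exact Finset.sum_congr rfl fun _ _ => Finset.sum_congr rfl fun _ _ => by ring

theorem YB2_eq_sum_right (r s : TT2) (μ ν lam : Bas) :
    YB2 r s μ ν lam = ∑ a, r a ν * ∑ c, s c lam * Cstr a c μ
      + ∑ b, r μ b * ∑ c, s c lam * Cstr b c ν + ∑ b, r μ b * ∑ d, s ν d * Cstr b d lam := by
  simp only [YB2, Finset.mul_sum, mul_assoc]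

theorem YB2_eq_sum_left (r s : TT2) (μ ν lam : Bas) :
    YB2 s r μ ν lam = ∑ c, r c lam * ∑ a, s a ν * Cstr a c μ
      + ∑ c, r c lam * ∑ b, s μ b * Cstr b c ν + ∑ d, r ν d * ∑ b, s μ b * Cstr b d lam := by
  simp only [YB2, Finset.mul_sum]
  rw [Finset.sum_comm (γ := Bas) (f := fun a c => s a ν * r c lam * Cstr a c μ),
    Finset.sum_comm (γ := Bas) (f := fun b c => s μ b * r c lam * Cstr b c ν),
    Finset.sum_comm (γ := Bas) (f := fun b d => s μ b * r ν d * Cstr b d lam)]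
  simp only [mul_assoc, mul_left_comm (r _ _)]

theorem sum_wedgeT_mul_Cstr_right (x y : iso21) (a μ lam : Bas) :
    ∑ c, wedgeT x y c lam * Cstr a c μ
      = coeff x lam * coeff (br y (basis a)) μ - coeff y lam * coeff (br x (basis a)) μ := by
  simp only [wedgeT, tens, sub_mul, Finset.sum_sub_distrib, mul_right_comm _ (coeff _ lam),
    ← Finset.sum_mul, sum_coeff_mul_Cstr]
  ring

theorem sum_wedgeT_mul_Cstr_left (x y : iso21) (c μ ν : Bas) :
    ∑ a, wedgeT x y a ν * Cstr a c μ
      = coeff y ν * coeff (br x (basis c)) μ - coeff x ν * coeff (br y (basis c)) μ := by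
  simp only [wedgeT, tens, sub_mul, Finset.sum_sub_distrib, mul_right_comm _ (coeff _ ν),
    ← Finset.sum_mul, coeff_br_basis_right]
  ring

theorem sum_mul_sub_mul (f g h : Bas → ℝ) (p q : ℝ) :
    ∑ a, f a * (p * g a - q * h a) = p * ∑ a, f a * g a - q * ∑ a, f a * h a := by
  simp only [mul_sub, Finset.sum_sub_distrib, Finset.mul_sum, mul_left_comm (f _)]

theorem YB2_wedgeT_add_YB2_wedgeT (r : TT2) (x y : iso21) (μ ν lam : Bas) :
    YB2 r (wedgeT x y) μ ν lam + YB2 (wedgeT x y) r μ ν lam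
      = coeff x lam * act2 y r μ ν - coeff y lam * act2 x r μ ν
        + coeff y ν * act2 x r μ lam - coeff x ν * act2 y r μ lam
        + coeff x μ * act2 y r ν lam - coeff y μ * act2 x r ν lam := by
  rw [YB2_eq_sum_right, YB2_eq_sum_left]
  simp only [sum_wedgeT_mul_Cstr_right, sum_wedgeT_mul_Cstr_left, wedgeT_apply_comm x y ν,
    wedgeT_apply_comm x y μ, sum_mul_sub_mul, act2]
  ring

theorem YB2_wedgeT_self {x y : iso21} (h : br x y = 0) (μ ν lam : Bas) :
    YB2 (wedgeT x y) (wedgeT x y) μ ν lam = 0 := by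
  have hx : act2 x (wedgeT x y) = 0 := by
    rw [act2_wedgeT, br_self, h]
    simp [wedgeT_eq_tens_sub, tens_zero_left, tens_zero_right]
  have hy : act2 y (wedgeT x y) = 0 := by
    rw [act2_wedgeT, br_self, br_swap x y, h, neg_zero]
    simp [wedgeT_eq_tens_sub, tens_zero_left, tens_zero_right]
  have := YB2_wedgeT_add_YB2_wedgeT (wedgeT x y) x y μ ν lam
  simp only [hx, hy, Pi.zero_apply, mul_zero, sub_zero, add_zero] at this
  linarith

theorem rSym_eq : rSym = (1 / 2 : ℝ) • (tens (Pb 0) (Jb 0) + tens (Jb 0) (Pb 0)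
    - (tens (Pb 1) (Jb 1) + tens (Jb 1) (Pb 1)) - (tens (Pb 2) (Jb 2) + tens (Jb 2) (Pb 2))) := by
  funext μ ν
  simp [rSym, Fin.sum_univ_three, ηm]
  ring

theorem ra_eq (ψ α : ℝ) : ra ψ α = rSym
    + ((1 / 2) * Real.tan (ψ / 2)) • (wedgeT (Pb 1) (Jb 2) - wedgeT (Pb 2) (Jb 1))
    + (α / (4 * Real.cos (ψ / 2) ^ 2)) • wedgeT (Pb 1) (Pb 2) := rfl

theorem act2_Jb_zero_ra (ψ α : ℝ) : act2 (Jb 0) (ra ψ α) = 0 := by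
  simp only [ra_eq, rSym_eq, wedgeT_eq_tens_sub, act2_add, act2_sub, act2_smul, act2_tens,
    br_self, br_Jb_zero_Jb_one, br_Jb_zero_Jb_two, br_Jb_zero_Pb_zero, br_Jb_zero_Pb_one,
    br_Jb_zero_Pb_two, tens_neg_left, tens_neg_right, tens_zero_left, tens_zero_right]
  abel_nf
  simp

theorem act2_Pb_zero_ra (ψ α : ℝ) : act2 (Pb 0) (ra ψ α) = 0 := by
  simp only [ra_eq, rSym_eq, wedgeT_eq_tens_sub, act2_add, act2_sub, act2_smul, act2_tens,
    br_self, br_Pb_zero_Jb_zero, br_Pb_zero_Jb_one, br_Pb_zero_Jb_two, br_Pb_Pb,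
    tens_neg_left, tens_neg_right, tens_zero_left, tens_zero_right]
  abel_nf
  simp

theorem rho19_eq_smul (β δ : ℝ → ℝ) (ψ : ℝ) :
    rho19 β δ ψ = (deriv β ψ - δ ψ) • wedgeT (Pb 0) (Jb 0) := rfl

theorem YB2_ra_rho19 (β δ : ℝ → ℝ) (ψ α : ℝ) (μ ν lam : Bas) :
    YB2 (ra ψ α) (rho19 β δ ψ) μ ν lam + YB2 (rho19 β δ ψ) (ra ψ α) μ ν lam = 0 := by
  rw [rho19_eq_smul, YB2_smul_right, YB2_smul_left, ← mul_add, YB2_wedgeT_add_YB2_wedgeT,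
    act2_Jb_zero_ra, act2_Pb_zero_ra]
  simp

theorem YB2_rho19_self (β δ : ℝ → ℝ) (ψ : ℝ) (μ ν lam : Bas) :
    YB2 (rho19 β δ ψ) (rho19 β δ ψ) μ ν lam = 0 := by
  rw [rho19_eq_smul, YB2_smul_left, YB2_smul_right, YB2_wedgeT_self br_Pb_zero_Jb_zero,
    mul_zero, mul_zero]

theorem ra_apply_of_wedgeT_ne_zero {σ τ : Bas} (h : wedgeT (Pb 0) (Jb 0) σ τ ≠ 0) (ψ α : ℝ) :
    ra ψ α σ τ = 1 / 2 := by
  rcases σ with ⟨_ | _, σ⟩ <;> rcases τ with ⟨_ | _, τ⟩ <;> fin_cases σ <;> fin_cases τ <;>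
    simp_all [ra, rSym, wedgeT, tens, coeff, Jb, Pb, Jvec, Pvec, ηm]

/-- No differentiability of `β' - δ` is needed: on the entries where `ρ` is nonzero,
`r_a` is constant. -/
theorem deriv_ra_add_rho19 (β δ : ℝ → ℝ) (ψ α : ℝ) (σ τ : Bas) :
    deriv (fun s => ra s α σ τ + rho19 β δ s σ τ) ψ
      = deriv (fun s => ra s α σ τ) ψ
        + deriv (fun s => deriv β s - δ s) ψ * wedgeT (Pb 0) (Jb 0) σ τ := by
  change deriv (fun s => ra s α σ τ + (deriv β s - δ s) * wedgeT (Pb 0) (Jb 0) σ τ) ψ = _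
  by_cases h : wedgeT (Pb 0) (Jb 0) σ τ = 0
  · simp [h]
  · simp only [ra_apply_of_wedgeT_ne_zero h, deriv_const_add, deriv_const, deriv_mul_const_field,
      zero_add]

theorem CDYBEat_ra_add_rho19 (β δ : ℝ → ℝ) {ψ α : ℝ}
    (h : CDYBEat ra (fun _ _ => Pb 0) (fun _ _ => Jb 0) ψ α) :
    CDYBEat (fun s a => fun σ τ => ra s a σ τ + rho19 β δ s σ τ)
      (fun _ _ => Pb 0) (fun _ _ => Jb 0) ψ α := by
  intro μ ν lam
  have hYB : YB2 (ra ψ α + rho19 β δ ψ) (ra ψ α + rho19 β δ ψ) μ ν lam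
      = YB2 (ra ψ α) (ra ψ α) μ ν lam := by
    rw [YB2_add_left, YB2_add_right, YB2_add_right, YB2_rho19_self]
    linarith [YB2_ra_rho19 β δ ψ α μ ν lam]
  simp only [deriv_add_const, deriv_ra_add_rho19]
  rw [show (fun σ τ => ra ψ α σ τ + rho19 β δ ψ σ τ) = ra ψ α + rho19 β δ ψ from rfl, hYB,
    h μ ν lam]
  linear_combination (-deriv (fun s => deriv β s - δ s) ψ) *
    coeff_mul_wedgeT_alternating (Pb 0) (Jb 0) μ ν lam

/-- [[r_a,ρ]] + [[ρ,r_a]] = 0 and [[ρ,ρ]] = 0; consequently, if r_a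
satisfies the CDYBE with x₁ = P₀, x₂ = J₀, then so does r_a + ρ. -/
theorem stmt19 (β δ : ℝ → ℝ) :
    (∀ ψ ∈ Set.Ioo (-(π/2)) (π/2), ∀ α : ℝ, ∀ μ ν lam : Bas,
      YB2 (ra ψ α) (rho19 β δ ψ) μ ν lam + YB2 (rho19 β δ ψ) (ra ψ α) μ ν lam = 0) ∧
    (∀ ψ : ℝ, ∀ μ ν lam : Bas, YB2 (rho19 β δ ψ) (rho19 β δ ψ) μ ν lam = 0) ∧
    ((∀ ψ ∈ Set.Ioo (-(π/2)) (π/2), ∀ α : ℝ,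
        CDYBEat ra (fun _ _ => Pb 0) (fun _ _ => Jb 0) ψ α) →
      ∀ ψ ∈ Set.Ioo (-(π/2)) (π/2), ∀ α : ℝ,
        CDYBEat (fun s a => fun σ τ => ra s a σ τ + rho19 β δ s σ τ)
          (fun _ _ => Pb 0) (fun _ _ => Jb 0) ψ α) :=
  ⟨fun ψ _ α => YB2_ra_rho19 β δ ψ α, YB2_rho19_self β δ,
    fun h ψ hψ α => CDYBEat_ra_add_rho19 β δ (h ψ hψ α)⟩
end
end
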